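/- arXiv:2203.08572 — 5 statements merged into one kernel-verified Lean document; each statement's English description precedes it below -/
import Mathlib

section
/- Any set of r + 1 consecutive vertices {x_i, x_{i+1}, ..., x_{i+r}} (indices modulo n) in the graph G_{n,r} is a maximal independent set. -/
/-- The graph `G_{n,r}`: vertices `x_1,…,x_n` in cyclic order (indexed by `ZMod n`),
where for `i < j` the vertices `x_i, x_j` are adjacent iff `r+1 ≤ j-i ≤ n-(r+1)`. -/
def Gnr (n r : ℕ) : SimpleGraph (ZMod n) :=
  SimpleGraph.fromRel (fun i j => r + 1 ≤ j.val - i.val ∧ j.val - i.val ≤ n - (r + 1))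

/-- A set of vertices is independent if its elements are pairwise non-adjacent. -/
def IsIndepSet {V : Type*} (G : SimpleGraph V) (s : Set V) : Prop :=
  s.Pairwise (fun a b => ¬ G.Adj a b)

/-- A maximal independent set. -/
def IsMaxIndepSet {V : Type*} (G : SimpleGraph V) (s : Set V) : Prop :=
  IsIndepSet G s ∧ ∀ t : Set V, IsIndepSet G t → s ⊆ t → t = s

lemma adj_iff {n r : ℕ} [NeZero n] (a b : ZMod n) :
    (Gnr n r).Adj a b ↔ r + 1 ≤ (b - a).val ∧ (b - a).val ≤ n - (r + 1) := by
  have hn : 0 < n := Nat.pos_of_ne_zero (NeZero.ne n)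
  have ha := a.val_lt
  have hb := b.val_lt
  have hne : a ≠ b ↔ a.val ≠ b.val := (ZMod.val_injective n).ne_iff.symm
  simp only [Gnr, SimpleGraph.fromRel_adj]
  rcases le_total a.val b.val with h | h
  · rw [ZMod.val_sub h, hne]
    omega
  · have h2 : (b - a).val = (n - (a - b).val) % n := by
      rw [show b - a = -(a - b) by ring, ZMod.neg_val']
    rw [ZMod.val_sub h] at h2
    have h3 := (a - b).val_lt
    rw [ZMod.val_sub h] at h3
    rcases Nat.eq_or_lt_of_le h with heq | hlt
    · have : a = b := ZMod.val_injective n heq.symm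
      subst this
      simp
    · rw [Nat.mod_eq_of_lt (by omega)] at h2
      rw [hne]
      omega

/-- Any set of `r+1` consecutive vertices `{x_i, x_{i+1}, …, x_{i+r}}`
(indices mod `n`) of `G_{n,r}` is a maximal independent set. -/
theorem stmt1 (n r : ℕ) (hn : 2 ≤ n) (hr : r ≤ n / 2 - 1) (i : ZMod n) :
    IsMaxIndepSet (Gnr n r) {v : ZMod n | ∃ k : ℕ, k ≤ r ∧ v = i + (k : ZMod n)} := by
  haveI : NeZero n := ⟨by omega⟩
  have h2r : 2 * (r + 1) ≤ n := by omega
  constructor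
  · rintro a ⟨k, hk, rfl⟩ b ⟨l, hl, rfl⟩ hab
    rw [adj_iff]
    rcases lt_trichotomy k l with h | h | h
    · have hd : (i + (l : ZMod n)) - (i + (k : ZMod n)) = ((l - k : ℕ) : ZMod n) := by
        push_cast [Nat.cast_sub h.le]; ring
      rw [hd, ZMod.val_cast_of_lt (by omega)]
      omega
    · exact absurd (by rw [h]) hab
    · have hd : (i + (l : ZMod n)) - (i + (k : ZMod n)) = -((k - l : ℕ) : ZMod n) := by
        push_cast [Nat.cast_sub h.le]; ring
      rw [hd, ZMod.neg_val, if_neg, ZMod.val_cast_of_lt (by omega)]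
      · omega
      · intro h0
        have := ZMod.val_cast_of_lt (n := n) (a := k - l) (by omega)
        rw [h0, ZMod.val_zero] at this
        omega
  · intro t ht hst
    ext v
    refine ⟨fun hv => ?_, fun hv => hst hv⟩
    by_contra hvs
    set m := (v - i).val with hm
    have hmv : ((m : ℕ) : ZMod n) = v - i := ZMod.natCast_zmod_val _
    have hmn : m < n := (v - i).val_lt
    clear_value m
    have hvm : v = i + (m : ZMod n) := by rw [hmv]; ring
    have hmr : r + 1 ≤ m := by
      by_contra h
      exact hvs ⟨m, by omega, hvm⟩
    by_cases hcase : m ≤ n - (r + 1)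
    · -- v adjacent to i
      have hadj : (Gnr n r).Adj i v := by
        rw [adj_iff]
        constructor <;> omega
      have hiS : i ∈ {v : ZMod n | ∃ k : ℕ, k ≤ r ∧ v = i + (k : ZMod n)} :=
        ⟨0, Nat.zero_le r, by simp⟩
      exact ht (hst hiS) hv (by rintro rfl; exact hvs hiS) hadj
    · -- v adjacent to i + k where k = m - (n - (r+1))
      set k : ℕ := m - (n - (r + 1)) with hkdef
      have hk1 : k ≤ r := by omega
      have hk2 : k ≤ m := by omega
      have hk3 : m - k = n - (r + 1) := by omega
      have hwS : i + (k : ZMod n) ∈ {v : ZMod n | ∃ k : ℕ, k ≤ r ∧ v = i + (k : ZMod n)} :=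
        ⟨k, hk1, rfl⟩
      have hadj : (Gnr n r).Adj (i + (k : ZMod n)) v := by
        rw [adj_iff]
        have hd : v - (i + (k : ZMod n)) = ((m - k : ℕ) : ZMod n) := by
          rw [hvm]; push_cast [Nat.cast_sub hk2]; ring
        rw [hd, ZMod.val_cast_of_lt (by omega)]
        omega
      exact ht (hst hwS) hv (by rintro rfl; exact hvs hwS) hadj
end

section
/- Every independent set in the graph G_{n,r} has cardinality at most r + 1; consequently, the independence number of G_{n,r} equals r + 1. -/
section Aux

variable {n : ℕ} [NeZero n]

/-- Iterated "blow up by shifting": `iterShift A k = A + {0,1,…,k}`. -/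
def iterShift (A : Finset (ZMod n)) : ℕ → Finset (ZMod n)
  | 0 => A
  | k + 1 => iterShift A k ∪ (iterShift A k).image (· + 1)

lemma subset_iterShift (A : Finset (ZMod n)) (k : ℕ) : A ⊆ iterShift A k := by
  induction k with
  | zero => exact Finset.Subset.refl A
  | succ k ih => exact ih.trans Finset.subset_union_left

lemma mem_iterShift {A : Finset (ZMod n)} {k : ℕ} {x : ZMod n} (hx : x ∈ iterShift A k) :
    ∃ a ∈ A, ∃ j ≤ k, x = a + (j : ℕ) := by
  induction k generalizing x with
  | zero => exact ⟨x, hx, 0, le_refl 0, by simp⟩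
  | succ k ih =>
    rcases Finset.mem_union.1 hx with h | h
    · obtain ⟨a, ha, j, hj, hxe⟩ := ih h
      exact ⟨a, ha, j, hj.trans (Nat.le_succ k), hxe⟩
    · obtain ⟨y, hy, rfl⟩ := Finset.mem_image.1 h
      obtain ⟨a, ha, j, hj, rfl⟩ := ih hy
      exact ⟨a, ha, j + 1, by omega, by push_cast; ring⟩

lemma eq_univ_of_shift {B : Finset (ZMod n)} (hB : B.Nonempty)
    (h : B.image (· + 1) ⊆ B) : B = Finset.univ := by
  have hinj : Function.Injective (fun x : ZMod n => x + 1) := add_left_injective 1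
  have himg : B.image (· + 1) = B := by
    apply Finset.eq_of_subset_of_card_le h
    rw [Finset.card_image_of_injective _ hinj]
  have hstep : ∀ b ∈ B, b + 1 ∈ B := by
    intro b hb
    rw [← himg]
    exact Finset.mem_image_of_mem _ hb
  have hiter : ∀ (k : ℕ), ∀ b ∈ B, b + (k : ℕ) ∈ B := by
    intro k
    induction k with
    | zero => intro b hb; simpa using hb
    | succ k ih =>
      intro b hb
      have := hstep _ (ih b hb)
      have he : b + ((k : ℕ) : ZMod n) + 1 = b + ((k + 1 : ℕ) : ZMod n) := by
        push_cast; ring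
      rwa [he] at this
  obtain ⟨b, hb⟩ := hB
  apply Finset.eq_univ_of_forall
  intro x
  have := hiter (x - b).val b hb
  rwa [ZMod.natCast_val, ZMod.cast_id, add_sub_cancel] at this

lemma card_iterShift {A : Finset (ZMod n)} (hA : A.Nonempty) (k : ℕ) :
    min n (A.card + k) ≤ (iterShift A k).card := by
  induction k with
  | zero =>
    simp only [iterShift, Nat.add_zero]
    exact min_le_right _ _
  | succ k ih =>
    by_cases h : (iterShift A k).image (· + 1) ⊆ iterShift A k
    · have huniv : iterShift A k = Finset.univ :=
        eq_univ_of_shift (hA.mono (subset_iterShift A k)) h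
      have hcard : n ≤ (iterShift A (k + 1)).card := by
        have hsub : iterShift A k ⊆ iterShift A (k + 1) := Finset.subset_union_left
        have := Finset.card_le_card hsub
        rw [huniv, Finset.card_univ, ZMod.card] at this
        omega
      omega
    · rw [Finset.not_subset] at h
      obtain ⟨x, hx, hxn⟩ := h
      have hins : insert x (iterShift A k) ⊆ iterShift A (k + 1) := by
        apply Finset.insert_subset
        · exact Finset.mem_union_right _ hx
        · exact Finset.subset_union_left
      have h1 : (iterShift A k).card + 1 ≤ (iterShift A (k + 1)).card := by
        have := Finset.card_le_card hins
        rwa [Finset.card_insert_of_notMem hxn] at this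
      omega

end Aux

/-- Every independent set of `G_{n,r}` has cardinality at most `r+1`,
and the independence number equals `r+1` (some independent set attains `r+1`). -/
theorem stmt2 (n r : ℕ) (hn : 2 ≤ n) (hr : r ≤ n / 2 - 1) :
    (∀ s : Finset (ZMod n), IsIndepSet (Gnr n r) ↑s → s.card ≤ r + 1) ∧
    (∃ s : Finset (ZMod n), IsIndepSet (Gnr n r) ↑s ∧ s.card = r + 1) := by
  haveI : NeZero n := ⟨by omega⟩
  have hn2 : 2 * r + 2 ≤ n := by omega
  constructor
  · -- upper bound
    intro s hs
    by_contra hcard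
    push_neg at hcard
    have hsne : s.Nonempty := Finset.card_pos.1 (by omega)
    set A := s.image (fun a => a + ((r + 1 : ℕ) : ZMod n)) with hA
    have hAcard : A.card = s.card :=
      Finset.card_image_of_injective _ (add_left_injective _)
    have hAne : A.Nonempty := hsne.image _
    set U := iterShift A (n - 2 * r - 2) with hU
    have hdisj : ∀ x ∈ U, x ∉ s := by
      intro x hxU hxs
      obtain ⟨a', ha', j, hj, rfl⟩ := mem_iterShift hxU
      obtain ⟨a, ha, rfl⟩ := Finset.mem_image.1 ha'
      have htx : a + ((r + 1 : ℕ) : ZMod n) + (j : ℕ) = a + ((r + 1 + j : ℕ) : ZMod n) := by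
        push_cast; ring
      rw [htx] at hxs
      set t := r + 1 + j with ht
      have ht1 : r + 1 ≤ t := by omega
      have ht2 : t ≤ n - (r + 1) := by omega
      have htn : t < n := by omega
      have htval : ((t : ℕ) : ZMod n).val = t := by
        rw [ZMod.val_natCast, Nat.mod_eq_of_lt htn]
      have hne : a ≠ a + (t : ℕ) := by
        intro hEq
        have h0 : ((t : ℕ) : ZMod n) = 0 := by
          have := hEq.symm
          rwa [add_eq_left] at this
        rw [h0, ZMod.val_zero] at htval
        omega
      have hav : a.val < n := ZMod.val_lt a
      have hxval : (a + ((t : ℕ) : ZMod n)).val = (a.val + t) % n := by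
        rw [ZMod.val_add, htval]
      have hadj : (Gnr n r).Adj a (a + (t : ℕ)) := by
        rw [Gnr, SimpleGraph.fromRel_adj]
        refine ⟨hne, ?_⟩
        rcases Nat.lt_or_ge (a.val + t) n with hlt | hge
        · left
          rw [hxval, Nat.mod_eq_of_lt hlt]
          omega
        · right
          have hmod : (a.val + t) % n = a.val + t - n := by
            rw [Nat.mod_eq_sub_mod hge, Nat.mod_eq_of_lt (by omega)]
          rw [hxval, hmod]
          omega
      exact hs (Finset.mem_coe.2 ha) (Finset.mem_coe.2 hxs) hne hadj
    have hUcard : min n (A.card + (n - 2 * r - 2)) ≤ U.card :=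
      card_iterShift hAne _
    have hdisj' : Disjoint U s := by
      rw [Finset.disjoint_left]
      exact hdisj
    have hUn : U.card + s.card ≤ n := by
      have := Finset.card_le_univ (U ∪ s)
      rw [Finset.card_union_of_disjoint hdisj', ZMod.card] at this
      exact this
    rw [min_def] at hUcard
    split_ifs at hUcard <;> omega
  · -- existence
    refine ⟨(Finset.range (r + 1)).image (Nat.cast : ℕ → ZMod n), ?_, ?_⟩
    · intro a ha b hb hne hadj
      obtain ⟨i, hi, rfl⟩ := Finset.mem_image.1 (Finset.mem_coe.1 ha)
      obtain ⟨j, hj, rfl⟩ := Finset.mem_image.1 (Finset.mem_coe.1 hb)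
      rw [Finset.mem_range] at hi hj
      have hiv : ((i : ℕ) : ZMod n).val = i := by
        rw [ZMod.val_natCast, Nat.mod_eq_of_lt (by omega)]
      have hjv : ((j : ℕ) : ZMod n).val = j := by
        rw [ZMod.val_natCast, Nat.mod_eq_of_lt (by omega)]
      rw [Gnr, SimpleGraph.fromRel_adj] at hadj
      rcases hadj.2 with ⟨h1, h2⟩ | ⟨h1, h2⟩
      · rw [hiv, hjv] at h1; omega
      · rw [hiv, hjv] at h1; omega
    · rw [Finset.card_image_of_injOn, Finset.card_range]
      intro i hi j hj hij
      rw [Finset.mem_coe, Finset.mem_range] at hi hj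
      have hiv : ((i : ℕ) : ZMod n).val = i := by
        rw [ZMod.val_natCast, Nat.mod_eq_of_lt (by omega)]
      have hjv : ((j : ℕ) : ZMod n).val = j := by
        rw [ZMod.val_natCast, Nat.mod_eq_of_lt (by omega)]
      rw [← hiv, ← hjv, hij]
end

section
/- For r = 2 and any n ≥ 6, the graph G_{n,2} is unmixed: every maximal independent set of G_{n,2} has the same cardinality, namely 3. -/
/-!
Two vertices of `G_{n,r}` are non-adjacent exactly when their cyclic distance is at most `r`.
So two non-adjacent vertices `x`, `y` always have a third common non-neighbour, `x ± 1`, and a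
maximal independent set has at least three elements. Conversely, four pairwise non-adjacent
vertices of `G_{n,2}` would sit at three distinct non-zero offsets in `[-2, 2]` from one of them;
two of these offsets differ by `3`, and vertices at cyclic distance `3` are adjacent once `n ≥ 6`.
-/

section IndependentSets

variable {V : Type*} {G : SimpleGraph V} {s : Set V}

theorem IsMaxIndepSet.mem_of_forall_not_adj (hs : IsMaxIndepSet G s) {z : V}
    (hz : ∀ x ∈ s, ¬G.Adj x z) : z ∈ s := by
  have : Std.Symm fun a b => ¬G.Adj a b := ⟨fun _ _ h h' => h h'.symm⟩
  have hins : IsIndepSet G (insert z s) :=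
    Set.pairwise_insert_of_symm.mpr ⟨hs.1, fun x hx _ hzx => hz x hx hzx.symm⟩
  rw [← hs.2 _ hins (Set.subset_insert z s)]
  exact Set.mem_insert z s

theorem IsMaxIndepSet.two_lt_ncard [Finite V] [Nonempty V] (hs : IsMaxIndepSet G s)
    (hG : ∀ x y, ¬G.Adj x y → ∃ z, z ≠ x ∧ z ≠ y ∧ ¬G.Adj x z ∧ ¬G.Adj y z) :
    2 < s.ncard := by
  by_contra! h
  obtain ⟨x, y, hxy, hsub⟩ : ∃ x y, ¬G.Adj x y ∧ s ⊆ {x, y} := by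
    rcases (by omega : s.ncard = 0 ∨ s.ncard = 1 ∨ s.ncard = 2) with h | h | h
    · obtain rfl := (Set.ncard_eq_zero).mp h
      exact ⟨Classical.arbitrary V, _, G.irrefl, Set.empty_subset _⟩
    · obtain ⟨a, rfl⟩ := Set.ncard_eq_one.mp h
      exact ⟨a, a, G.irrefl, by simp⟩
    · obtain ⟨a, b, hab, rfl⟩ := Set.ncard_eq_two.mp h
      exact ⟨a, b, hs.1 (by simp) (by simp) hab, subset_rfl⟩
  obtain ⟨z, hzx, hzy, hxz, hyz⟩ := hG x y hxy
  have hz : z ∈ s := hs.mem_of_forall_not_adj fun w hw => by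
    rcases hsub hw with rfl | rfl <;> assumption
  rcases hsub hz with rfl | rfl <;> contradiction

end IndependentSets

theorem ZMod.eq_add_intCast_iff {n : ℕ} [NeZero n] {x y : ZMod n} {k : ℤ} :
    y = x + k ↔ (n : ℤ) ∣ (y.val : ℤ) - x.val - k := by
  rw [← ZMod.intCast_zmod_eq_zero_iff_dvd]
  push_cast
  rw [ZMod.natCast_zmod_val, ZMod.natCast_zmod_val, sub_sub, sub_eq_zero]

theorem ZMod.intCast_eq_zero_iff_of_natAbs_lt {n : ℕ} {k : ℤ} (hk : k.natAbs < n) :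
    (k : ZMod n) = 0 ↔ k = 0 := by
  refine ⟨fun h => ?_, fun h => by rw [h, Int.cast_zero]⟩
  exact Int.eq_zero_of_dvd_of_natAbs_lt_natAbs ((ZMod.intCast_zmod_eq_zero_iff_dvd k n).mp h)
    (by rwa [Int.natAbs_natCast])

section CyclicDistance

variable {n r : ℕ} [NeZero n]

theorem gnr_not_adj_iff {x y : ZMod n} :
    ¬(Gnr n r).Adj x y ↔ ∃ k : ℤ, k.natAbs ≤ r ∧ y = x + k := by
  simp only [ZMod.eq_add_intCast_iff]
  have hx := x.val_lt
  have hy := y.val_lt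
  constructor
  · intro h
    by_cases hd : ((y.val : ℤ) - x.val).natAbs ≤ r
    · exact ⟨_, hd, 0, by ring⟩
    have hxy : x ≠ y := by rintro rfl; simp at hd
    simp only [Gnr, SimpleGraph.fromRel_adj, ne_eq, hxy, not_false_eq_true, true_and, not_or] at h
    rcases le_or_gt x.val y.val with hle | hlt
    · exact ⟨(y.val : ℤ) - x.val - n, by omega, 1, by ring⟩
    · exact ⟨(y.val : ℤ) - x.val + n, by omega, -1, by ring⟩
  · rintro ⟨k, hk, hdvd⟩ hadj
    simp only [Gnr, SimpleGraph.fromRel_adj] at hadj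
    have := Int.eq_zero_of_dvd_of_natAbs_lt_natAbs hdvd (by rw [Int.natAbs_natCast]; omega)
    omega

theorem gnr_adj_add_intCast (x : ZMod n) {k : ℤ} (h₁ : r < k.natAbs) (h₂ : k.natAbs + r < n) :
    (Gnr n r).Adj x (x + k) := by
  by_contra h
  obtain ⟨m, hm, hxm⟩ := gnr_not_adj_iff.mp h
  have : ((k - m : ℤ) : ZMod n) = 0 := by push_cast; linear_combination hxm
  rw [ZMod.intCast_eq_zero_iff_of_natAbs_lt (by omega)] at this
  omega

theorem gnr_exists_common_not_adj (hr : 2 ≤ r) (hrn : r < n) {x y : ZMod n}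
    (h : ¬(Gnr n r).Adj x y) :
    ∃ z, z ≠ x ∧ z ≠ y ∧ ¬(Gnr n r).Adj x z ∧ ¬(Gnr n r).Adj y z := by
  obtain ⟨d, hd, rfl⟩ := gnr_not_adj_iff.mp h
  obtain ⟨e, he, hed, hne⟩ : ∃ e : ℤ, e.natAbs = 1 ∧ (e - d).natAbs ≤ r ∧ e ≠ d :=
    if hd' : d = 1 ∨ d ≤ -2 then ⟨-1, by omega⟩ else ⟨1, by omega⟩
  refine ⟨x + e, fun hx => ?_, fun hy => ?_, gnr_not_adj_iff.mpr ⟨e, by omega, rfl⟩,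
    gnr_not_adj_iff.mpr ⟨e - d, hed, by push_cast; ring⟩⟩
  · have : (e : ZMod n) = 0 := by linear_combination hx
    rw [ZMod.intCast_eq_zero_iff_of_natAbs_lt (by omega)] at this
    omega
  · have : ((e - d : ℤ) : ZMod n) = 0 := by push_cast; linear_combination hy
    rw [ZMod.intCast_eq_zero_iff_of_natAbs_lt (by omega)] at this
    omega

end CyclicDistance

theorem ncard_le_three_of_isIndepSet_gnr_two {n : ℕ} (hn : 6 ≤ n) {s : Set (ZMod n)}
    (hs : IsIndepSet (Gnr n 2) s) : s.ncard ≤ 3 := by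
  have : NeZero n := ⟨by omega⟩
  by_contra! h
  obtain ⟨a, ha⟩ := Set.nonempty_of_ncard_ne_zero (by omega : s.ncard ≠ 0)
  have offset : ∀ y ∈ s \ {a}, ∃ k : ℤ, k.natAbs ≤ 2 ∧ k ≠ 0 ∧ y = a + k := by
    rintro y ⟨hy, hya⟩
    obtain ⟨k, hk, rfl⟩ := gnr_not_adj_iff.mp (hs ha hy (Ne.symm hya))
    exact ⟨k, hk, by rintro rfl; simp at hya, rfl⟩
  have adj : ∀ k l : ℤ, (l - k).natAbs = 3 → (Gnr n 2).Adj (a + k) (a + l) := fun k l hkl => by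
    simpa using gnr_adj_add_intCast (a + (k : ZMod n)) (k := l - k) (by omega) (by omega)
  obtain ⟨b, c, d, hb, hc, hd, hbc, hbd, hcd⟩ :=
    (Set.two_lt_ncard_iff (s := s \ {a})).mp (by rw [Set.ncard_sdiff_singleton_of_mem ha]; omega)
  obtain ⟨k, hk, hk0, rfl⟩ := offset b hb
  obtain ⟨l, hl, hl0, rfl⟩ := offset c hc
  obtain ⟨m, hm, hm0, rfl⟩ := offset d hd
  have hkl : k ≠ l := by rintro rfl; exact hbc rfl
  have hkm : k ≠ m := by rintro rfl; exact hbd rfl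
  have hlm : l ≠ m := by rintro rfl; exact hcd rfl
  rcases (by omega : (l - k).natAbs = 3 ∨ (m - k).natAbs = 3 ∨ (m - l).natAbs = 3) with h | h | h
  · exact hs hb.1 hc.1 hbc (adj k l h)
  · exact hs hb.1 hd.1 hbd (adj k m h)
  · exact hs hc.1 hd.1 hcd (adj l m h)

/-- For `r = 2` and `n ≥ 6` the graph `G_{n,2}` is unmixed:
every maximal independent set has cardinality `3`. -/
theorem stmt4 (n : ℕ) (hn : 6 ≤ n) (s : Set (ZMod n)) (hs : IsMaxIndepSet (Gnr n 2) s) :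
    s.ncard = 3 := by
  have : NeZero n := ⟨by omega⟩
  have hlower := hs.two_lt_ncard fun _ _ => gnr_exists_common_not_adj le_rfl (by omega)
  have hupper := ncard_le_three_of_isIndepSet_gnr_two hn hs.1
  omega
end

section
/- The graph G_{n,r} is gap-free when r = 1 and n ≥ 5, and when r = 2 and n ≥ 9: for any two edges {x_i, x_j} and {x_k, x_l} of G_{n,r} with {i,j} ∩ {k,l} = ∅, at least one of the four pairs {x_i,x_k}, {x_i,x_l}, {x_j,x_k}, {x_j,x_l} is also an edge. -/
set_option maxHeartbeats 4000000 in
theorem stmt6_key (n r iv jv av bv : ℕ) (h : (r = 1 ∧ 5 ≤ n) ∨ (r = 2 ∧ 9 ≤ n))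
    (bi : iv < n) (bj : jv < n) (ba : av < n) (bb : bv < n)
    (e1 : (r + 1 ≤ jv - iv ∧ jv - iv ≤ n - (r+1)) ∨ (r + 1 ≤ iv - jv ∧ iv - jv ≤ n - (r+1)))
    (e2 : (r + 1 ≤ bv - av ∧ bv - av ≤ n - (r+1)) ∨ (r + 1 ≤ av - bv ∧ av - bv ≤ n - (r+1))) :
    ((r + 1 ≤ av - iv ∧ av - iv ≤ n - (r+1)) ∨ (r + 1 ≤ iv - av ∧ iv - av ≤ n - (r+1))) ∨
    ((r + 1 ≤ bv - iv ∧ bv - iv ≤ n - (r+1)) ∨ (r + 1 ≤ iv - bv ∧ iv - bv ≤ n - (r+1))) ∨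
    ((r + 1 ≤ av - jv ∧ av - jv ≤ n - (r+1)) ∨ (r + 1 ≤ jv - av ∧ jv - av ≤ n - (r+1))) ∨
    ((r + 1 ≤ bv - jv ∧ bv - jv ≤ n - (r+1)) ∨ (r + 1 ≤ jv - bv ∧ jv - bv ≤ n - (r+1))) := by
  rcases h with ⟨rfl, hn⟩ | ⟨rfl, hn⟩ <;> omega

/-- `G_{n,r}` is gap-free for `r = 1, n ≥ 5` and `r = 2, n ≥ 9`:
for any two vertex-disjoint edges `{x_i,x_j}` and `{x_k,x_l}`, one of the four
pairs `{x_i,x_k}, {x_i,x_l}, {x_j,x_k}, {x_j,x_l}` is also an edge. -/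
theorem stmt6 (n r : ℕ) (h : (r = 1 ∧ 5 ≤ n) ∨ (r = 2 ∧ 9 ≤ n)) (i j a b : ZMod n)
    (e1 : (Gnr n r).Adj i j) (e2 : (Gnr n r).Adj a b)
    (h1 : i ≠ a) (h2 : i ≠ b) (h3 : j ≠ a) (h4 : j ≠ b) :
    (Gnr n r).Adj i a ∨ (Gnr n r).Adj i b ∨ (Gnr n r).Adj j a ∨ (Gnr n r).Adj j b := by
  have hn : 0 < n := by rcases h with ⟨_, hn⟩ | ⟨_, hn⟩ <;> omega
  haveI : NeZero n := ⟨hn.ne'⟩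
  simp only [Gnr, SimpleGraph.fromRel_adj] at e1 e2 ⊢
  obtain ⟨-, e1⟩ := e1
  obtain ⟨-, e2⟩ := e2
  have key := stmt6_key n r i.val j.val a.val b.val h (ZMod.val_lt i) (ZMod.val_lt j)
    (ZMod.val_lt a) (ZMod.val_lt b) e1 e2
  rcases key with k | k | k | k
  · exact Or.inl ⟨h1, k⟩
  · exact Or.inr (Or.inl ⟨h2, k⟩)
  · exact Or.inr (Or.inr (Or.inl ⟨h3, k⟩))
  · exact Or.inr (Or.inr (Or.inr ⟨h4, k⟩))
end

section
/- Every set of n - (r + 1) consecutive vertices (in cyclic order) of G_{n,r} is a minimal vertex cover of G_{n,r}. -/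
/-- A vertex cover: a set of vertices meeting every edge. -/
def IsVertexCover {V : Type*} (G : SimpleGraph V) (C : Set V) : Prop :=
  ∀ ⦃a b : V⦄, G.Adj a b → a ∈ C ∨ b ∈ C

/-- A minimal vertex cover: no proper subset is a vertex cover. -/
def IsMinVertexCover {V : Type*} (G : SimpleGraph V) (C : Set V) : Prop :=
  IsVertexCover G C ∧ ∀ D ⊆ C, IsVertexCover G D → D = C

private lemma gnr_adj_iff (n r : ℕ) (hn : 4 ≤ n) (x y : ZMod n) :
    (Gnr n r).Adj x y ↔ r + 1 ≤ (y - x).val ∧ (y - x).val ≤ n - (r + 1) := by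
  haveI : NeZero n := ⟨by omega⟩
  have hx := ZMod.val_lt x
  have hy := ZMod.val_lt y
  simp only [Gnr, SimpleGraph.fromRel_adj, ne_eq]
  by_cases hxy : x = y
  · subst hxy; simp
  constructor
  · rintro ⟨-, h | h⟩
    · have hle : x.val ≤ y.val := by omega
      rw [ZMod.val_sub hle]
      omega
    · have hle : y.val ≤ x.val := by omega
      have hne : x - y ≠ 0 := sub_ne_zero.mpr hxy
      haveI : NeZero (x - y) := ⟨hne⟩
      have : (y - x) = -(x - y) := by ring
      rw [this, ZMod.val_neg_of_ne_zero, ZMod.val_sub hle]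
      have hvne : x.val ≠ y.val := fun h => hxy (ZMod.val_injective n h)
      omega
  · intro h
    refine ⟨hxy, ?_⟩
    have hvne : x.val ≠ y.val := fun h => hxy (ZMod.val_injective n h)
    rcases lt_or_ge x.val y.val with hlt | hle
    · left
      rw [ZMod.val_sub (le_of_lt hlt)] at h
      omega
    · right
      have hne : x - y ≠ 0 := sub_ne_zero.mpr hxy
      haveI : NeZero (x - y) := ⟨hne⟩
      have heq : (y - x) = -(x - y) := by ring
      rw [heq, ZMod.val_neg_of_ne_zero, ZMod.val_sub hle] at h
      omega

/-- Every set of `n-(r+1)` consecutive vertices (in cyclic order) of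
`G_{n,r}` is a minimal vertex cover. -/
theorem stmt8 (n r : ℕ) (hn : 4 ≤ n) (hr : r ≤ n / 2 - 1) (i : ZMod n) :
    IsMinVertexCover (Gnr n r)
      {v : ZMod n | ∃ k : ℕ, k < n - (r + 1) ∧ v = i + (k : ZMod n)} := by
  haveI : NeZero n := ⟨by omega⟩
  have h2r : 2 * (r + 1) ≤ n := by omega
  -- membership characterization
  have hmem : ∀ v : ZMod n,
      (v ∈ {v : ZMod n | ∃ k : ℕ, k < n - (r + 1) ∧ v = i + (k : ZMod n)}) ↔
        (v - i).val < n - (r + 1) := by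
    intro v
    constructor
    · rintro ⟨k, hk, rfl⟩
      have : (i + (k : ZMod n) - i) = (k : ZMod n) := by ring
      rw [this, ZMod.val_natCast_of_lt (by omega)]
      exact hk
    · intro h
      exact ⟨(v - i).val, h, by rw [ZMod.natCast_val, ZMod.cast_id]; ring⟩
  constructor
  · -- vertex cover
    intro a b hab
    by_contra hcon
    push_neg at hcon
    obtain ⟨ha, hb⟩ := hcon
    rw [hmem] at ha hb
    push_neg at ha hb
    rw [gnr_adj_iff n r hn] at hab
    have hA := ZMod.val_lt (a - i)
    have hB := ZMod.val_lt (b - i)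
    have hba : b - a = (b - i) - (a - i) := by ring
    rcases le_or_gt (a - i).val (b - i).val with hle | hlt
    · have : (b - a).val = (b - i).val - (a - i).val := by
        rw [hba, ZMod.val_sub hle]
      omega
    · have hne : (a - i) - (b - i) ≠ 0 := by
        intro h
        have := sub_eq_zero.mp h
        rw [this] at hlt; omega
      haveI : NeZero ((a - i) - (b - i)) := ⟨hne⟩
      have heq : b - a = -((a - i) - (b - i)) := by ring
      have : (b - a).val = n - ((a - i).val - (b - i).val) := by
        rw [heq, ZMod.val_neg_of_ne_zero, ZMod.val_sub (le_of_lt hlt)]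
      omega
  · -- minimality
    intro D hD hDcov
    apply Set.Subset.antisymm hD
    rintro v ⟨k, hk, rfl⟩
    set m : ℕ := max (n - r - 1) (k + r + 1) with hm
    have hmn : m < n := by omega
    have hu : (Gnr n r).Adj (i + (k : ZMod n)) (i + (m : ZMod n)) := by
      rw [gnr_adj_iff n r hn]
      have : i + (m : ZMod n) - (i + (k : ZMod n)) = ((m - k : ℕ) : ZMod n) := by
        push_cast [Nat.cast_sub (by omega : k ≤ m)]
        ring
      rw [this, ZMod.val_natCast_of_lt (by omega)]
      omega
    rcases hDcov hu with h | h
    · exact h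
    · exfalso
      have := hmem (i + (m : ZMod n)) |>.mp (hD h)
      have heq : i + (m : ZMod n) - i = (m : ZMod n) := by ring
      rw [heq, ZMod.val_natCast_of_lt hmn] at this
      omega
end
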